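/- Let (U,V) be a complete hereditary cotorsion pair in Mod-A that is weakly right periodic, and let n ≥ 0. If max{relspli(U), relFPD(U)} ≤ n, then an A-module M is injective if and only if M has U-projective dimension at most n and Ext_A^1(L,M) = 0 for every module L of U-projective dimension at most n. -/

import Mathlib

/-!
If `M` is injective, `relspli(U) ≤ n` bounds its `U`-resolution dimension by `n`, and
`Ext¹(-, M) = 0`. Conversely, embed `M` in an injective `E` with cokernel `C`. Because `(U, V)` is
complete and hereditary, `U` is resolving, and pulling short exact sequences back along
`U`-precovers shows that finiteness of the `U`-resolution dimension is a two-out-of-three property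
in short exact sequences. So `C` has finite `U`-resolution dimension, hence at most `n` as
`relFPD(U) ≤ n`; then `Ext¹(C, M) = 0`, the embedding `M → E` splits, and `M` is injective.
-/

universe u

open CategoryTheory Limits

namespace OSG

variable (A : Type u) [Ring A]

/-- `Ext¹_A(M,N) = 0`: every short exact sequence `0 → N → E → M → 0` splits. -/
def Ext1Zero (M N : ModuleCat.{u} A) : Prop :=
  ∀ (E : ModuleCat.{u} A) (i : N ⟶ E) (p : E ⟶ M),
    Function.Injective i → Function.Surjective p →
      LinearMap.range i.hom = LinearMap.ker p.hom → ∃ r : E ⟶ N, i ≫ r = 𝟙 N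

/-- `Ext^{n+1}_A(M,N) = 0`, expressed by dimension shifting along projective resolutions. -/
def ExtZeroSucc (n : ℕ) (M N : ModuleCat.{u} A) : Prop :=
  ∀ P : ProjectiveResolution M, Ext1Zero A (cokernel (P.complex.d (n + 1) n)) N

def IsCotorsionPair (U V : Set (ModuleCat.{u} A)) : Prop :=
  U = {M | ∀ N ∈ V, Ext1Zero A M N} ∧ V = {N | ∀ M ∈ U, Ext1Zero A M N}

/-- Every module has a special `U`-precover and a special `V`-preenvelope. -/
def IsCompletePair (U V : Set (ModuleCat.{u} A)) : Prop :=
  (∀ M : ModuleCat.{u} A, ∃ (K U₀ : ModuleCat.{u} A) (j : K ⟶ U₀) (p : U₀ ⟶ M),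
      U₀ ∈ U ∧ K ∈ V ∧ Function.Injective j ∧ Function.Surjective p ∧
        LinearMap.range j.hom = LinearMap.ker p.hom) ∧
  (∀ M : ModuleCat.{u} A, ∃ (V₀ C : ModuleCat.{u} A) (ι : M ⟶ V₀) (q : V₀ ⟶ C),
      V₀ ∈ V ∧ C ∈ U ∧ Function.Injective ι ∧ Function.Surjective q ∧
        LinearMap.range ι.hom = LinearMap.ker q.hom)

def IsHereditaryPair (U V : Set (ModuleCat.{u} A)) : Prop :=
  ∀ M ∈ U, ∀ N ∈ V, ∀ n : ℕ, ExtZeroSucc A n M N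

def leftPerp (C : Set (ModuleCat.{u} A)) : Set (ModuleCat.{u} A) :=
  {M | ∀ N ∈ C, Ext1Zero A M N}

def rightPerp (C : Set (ModuleCat.{u} A)) : Set (ModuleCat.{u} A) :=
  {N | ∀ M ∈ C, Ext1Zero A M N}

def GeneratedBySet (V : Set (ModuleCat.{u} A)) : Prop :=
  ∃ S : Set (ModuleCat.{u} A), V = rightPerp A S

/-- `M` has a resolution `0 → U_n → ⋯ → U_0 → M → 0` with all `U_i ∈ U`
(i.e. `U`-projective dimension at most `n`). -/
def ResLE (U : Set (ModuleCat.{u} A)) : ℕ → ModuleCat.{u} A → Prop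
  | 0, M => M ∈ U
  | n + 1, M =>
    ResLE U n M ∨
      ∃ (K U₀ : ModuleCat.{u} A) (j : K ⟶ U₀) (p : U₀ ⟶ M),
        U₀ ∈ U ∧ Function.Injective j ∧ Function.Surjective p ∧
          LinearMap.range j.hom = LinearMap.ker p.hom ∧ ResLE U n K

/-- `M` has a coresolution `0 → M → V^0 → ⋯ → V^n → 0` with all `V^i ∈ V`
(i.e. `V`-injective dimension at most `n`). -/
def CoresLE (V : Set (ModuleCat.{u} A)) : ℕ → ModuleCat.{u} A → Prop
  | 0, M => M ∈ V
  | n + 1, M =>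
    CoresLE V n M ∨
      ∃ (V₀ C : ModuleCat.{u} A) (ι : M ⟶ V₀) (q : V₀ ⟶ C),
        V₀ ∈ V ∧ Function.Injective ι ∧ Function.Surjective q ∧
          LinearMap.range ι.hom = LinearMap.ker q.hom ∧ CoresLE V n C

/-- The `U`-projective dimension of `M`, as an extended natural number. -/
noncomputable def resDim (U : Set (ModuleCat.{u} A)) (M : ModuleCat.{u} A) : ℕ∞ :=
  sInf {c : ℕ∞ | ∃ n : ℕ, c = n ∧ ResLE A U n M}

/-- The `V`-injective dimension of `M`, as an extended natural number. -/
noncomputable def coresDim (V : Set (ModuleCat.{u} A)) (M : ModuleCat.{u} A) : ℕ∞ :=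
  sInf {c : ℕ∞ | ∃ n : ℕ, c = n ∧ CoresLE A V n M}

def prjClass : Set (ModuleCat.{u} A) := {M | Projective M}

def injClass : Set (ModuleCat.{u} A) := {M | Injective M}

section Complexes

/-- The complex `T` is acyclic (exact everywhere). -/
def Acyclic (T : ChainComplex (ModuleCat.{u} A) ℤ) : Prop := ∀ n : ℤ, T.ExactAt n

/-- The complex `Hom_A(E, T)` is acyclic. -/
def HomIntoExact (E : ModuleCat.{u} A) (T : ChainComplex (ModuleCat.{u} A) ℤ) : Prop :=
  ∀ (n : ℤ) (f : E ⟶ T.X n), f ≫ T.d n (n - 1) = 0 →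
    ∃ g : E ⟶ T.X (n + 1), g ≫ T.d (n + 1) n = f

/-- The complex `Hom_A(T, W)` is acyclic. -/
def HomFromExact (T : ChainComplex (ModuleCat.{u} A) ℤ) (W : ModuleCat.{u} A) : Prop :=
  ∀ (n : ℤ) (f : T.X n ⟶ W), T.d (n + 1) n ≫ f = 0 →
    ∃ g : T.X (n - 1) ⟶ W, T.d n (n - 1) ≫ g = f

/-- `M` is a Gorenstein injective `A`-module. -/
def GorensteinInjective (M : ModuleCat.{u} A) : Prop :=
  ∃ T : ChainComplex (ModuleCat.{u} A) ℤ,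
    (∀ n, Injective (T.X n)) ∧ Acyclic A T ∧
      (∀ E : ModuleCat.{u} A, Injective E → HomIntoExact A E T) ∧
      ∃ n : ℤ, Nonempty (M ≅ T.cycles n)

/-- `M` is a Gorenstein projective `A`-module. -/
def GorensteinProjective (M : ModuleCat.{u} A) : Prop :=
  ∃ T : ChainComplex (ModuleCat.{u} A) ℤ,
    (∀ n, Projective (T.X n)) ∧ Acyclic A T ∧
      (∀ Q : ModuleCat.{u} A, Projective Q → HomFromExact A T Q) ∧
      ∃ n : ℤ, Nonempty (M ≅ T.cycles n)

end Complexes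
section Tensor

/-- The balancing relations inside `N ⊗_ℤ M` for a right module `N` and a left module `M`. -/
def balRel (N : ModuleCat.{u} Aᵐᵒᵖ) (M : ModuleCat.{u} A) :
    Submodule ℤ (TensorProduct ℤ N M) :=
  Submodule.span ℤ
    {x | ∃ (n : N) (a : A) (m : M),
      x = (MulOpposite.op a • n) ⊗ₜ[ℤ] m - n ⊗ₜ[ℤ] (a • m)}

/-- The tensor product `N ⊗_A M` of a right `A`-module and a left `A`-module. -/
def balTensor (N : ModuleCat.{u} Aᵐᵒᵖ) (M : ModuleCat.{u} A) : Type u :=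
  TensorProduct ℤ N M ⧸ balRel A N M

noncomputable instance (N : ModuleCat.{u} Aᵐᵒᵖ) (M : ModuleCat.{u} A) :
    AddCommGroup (balTensor A N M) :=
  inferInstanceAs (AddCommGroup (TensorProduct ℤ N M ⧸ balRel A N M))

noncomputable instance (N : ModuleCat.{u} Aᵐᵒᵖ) (M : ModuleCat.{u} A) :
    Module ℤ (balTensor A N M) :=
  inferInstanceAs (Module ℤ (TensorProduct ℤ N M ⧸ balRel A N M))

/-- The map `N ⊗_A M → N ⊗_A M'` induced by `f : M → M'`. -/
noncomputable def balMap (N : ModuleCat.{u} Aᵐᵒᵖ) {M M' : ModuleCat.{u} A} (f : M ⟶ M') :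
    balTensor A N M →ₗ[ℤ] balTensor A N M' :=
  Submodule.mapQ (balRel A N M) (balRel A N M')
    (LinearMap.lTensor (R := ℤ) N f.hom.toAddMonoidHom.toIntLinearMap)
    (by
      unfold balRel
      rw [Submodule.span_le]
      rintro x ⟨n, a, m, rfl⟩
      refine Submodule.mem_comap.mpr ?_
      erw [map_sub, LinearMap.lTensor_tmul, LinearMap.lTensor_tmul]
      have h : f.hom.toAddMonoidHom.toIntLinearMap (a • m) = a • f.hom.toAddMonoidHom.toIntLinearMap m :=
        f.hom.map_smul a m
      rw [h]
      exact Submodule.subset_span ⟨n, a, f.hom.toAddMonoidHom.toIntLinearMap m, rfl⟩)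

/-- The map `N ⊗_A M → N' ⊗_A M` induced by `g : N → N'`. -/
noncomputable def balMapR {N N' : ModuleCat.{u} Aᵐᵒᵖ} (g : N ⟶ N') (M : ModuleCat.{u} A) :
    balTensor A N M →ₗ[ℤ] balTensor A N' M :=
  Submodule.mapQ (balRel A N M) (balRel A N' M)
    (LinearMap.rTensor (R := ℤ) M g.hom.toAddMonoidHom.toIntLinearMap)
    (by
      unfold balRel
      rw [Submodule.span_le]
      rintro x ⟨n, a, m, rfl⟩
      refine Submodule.mem_comap.mpr ?_
      erw [map_sub, LinearMap.rTensor_tmul, LinearMap.rTensor_tmul]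
      have h : g.hom.toAddMonoidHom.toIntLinearMap (MulOpposite.op a • n) =
          MulOpposite.op a • g.hom.toAddMonoidHom.toIntLinearMap n :=
        g.hom.map_smul (MulOpposite.op a) n
      rw [h]
      exact Submodule.subset_span ⟨g.hom.toAddMonoidHom.toIntLinearMap n, a, m, rfl⟩)

/-- A left `A`-module `M` is flat if `− ⊗_A M` preserves injections of right `A`-modules. -/
def FlatM (M : ModuleCat.{u} A) : Prop :=
  ∀ (N N' : ModuleCat.{u} Aᵐᵒᵖ) (g : N ⟶ N'), Function.Injective g →
    Function.Injective (balMapR A g M)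

def flatClass : Set (ModuleCat.{u} A) := {M | FlatM A M}

/-- `M` is cotorsion if `Ext¹_A(F,M) = 0` for every flat module `F`. -/
def cotClass : Set (ModuleCat.{u} A) := {M | ∀ F ∈ flatClass A, Ext1Zero A F M}

end Tensor
section Rest

variable (A : Type u) [Ring A]

/-- Exactness of `N ⊗_A T` at spot `n`. -/
def TensorExactAt (N : ModuleCat.{u} Aᵐᵒᵖ) (T : ChainComplex (ModuleCat.{u} A) ℤ)
    (n : ℤ) : Prop :=
  LinearMap.range (balMap A N (T.d (n + 1) n)) = LinearMap.ker (balMap A N (T.d n (n - 1)))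

/-- `M` is a Gorenstein flat `A`-module. -/
def GorensteinFlat (M : ModuleCat.{u} A) : Prop :=
  ∃ T : ChainComplex (ModuleCat.{u} A) ℤ,
    (∀ n, T.X n ∈ flatClass A) ∧ Acyclic A T ∧
      (∀ N : ModuleCat.{u} Aᵐᵒᵖ, Injective N → ∀ n : ℤ, TensorExactAt A N T n) ∧
      ∃ n : ℤ, Nonempty (M ≅ T.cycles n)

def gprjClass : Set (ModuleCat.{u} A) := {M | GorensteinProjective A M}
def ginjClass : Set (ModuleCat.{u} A) := {M | GorensteinInjective A M}
def gflatClass : Set (ModuleCat.{u} A) := {M | GorensteinFlat A M}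

/-- projective dimension -/
noncomputable def pdim (M : ModuleCat.{u} A) : ℕ∞ := resDim A (prjClass A) M
/-- injective dimension -/
noncomputable def idim (M : ModuleCat.{u} A) : ℕ∞ := coresDim A (injClass A) M
/-- flat dimension -/
noncomputable def fdim (M : ModuleCat.{u} A) : ℕ∞ := resDim A (flatClass A) M
/-- Gorenstein projective dimension -/
noncomputable def gpdim (M : ModuleCat.{u} A) : ℕ∞ := resDim A (gprjClass A) M
/-- Gorenstein injective dimension -/
noncomputable def gidim (M : ModuleCat.{u} A) : ℕ∞ := coresDim A (ginjClass A) M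
/-- Gorenstein flat dimension -/
noncomputable def gfdim (M : ModuleCat.{u} A) : ℕ∞ := resDim A (gflatClass A) M

noncomputable def spli : ℕ∞ := ⨆ (I : ModuleCat.{u} A) (_ : Injective I), pdim A I
noncomputable def silp : ℕ∞ := ⨆ (P : ModuleCat.{u} A) (_ : Projective P), idim A P
noncomputable def sfli : ℕ∞ := ⨆ (I : ModuleCat.{u} A) (_ : Injective I), fdim A I
noncomputable def splf : ℕ∞ := ⨆ (F : ModuleCat.{u} A) (_ : F ∈ flatClass A), pdim A F

noncomputable def FPD : ℕ∞ := ⨆ (M : ModuleCat.{u} A) (_ : pdim A M ≠ ⊤), pdim A M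
noncomputable def FID : ℕ∞ := ⨆ (M : ModuleCat.{u} A) (_ : idim A M ≠ ⊤), idim A M
noncomputable def FFD : ℕ∞ := ⨆ (M : ModuleCat.{u} A) (_ : fdim A M ≠ ⊤), fdim A M

/-- Gorenstein global dimension. -/
noncomputable def Ggldim : ℕ∞ := ⨆ (M : ModuleCat.{u} A), gpdim A M
/-- Gorenstein weak global dimension. -/
noncomputable def Gwgldim : ℕ∞ := ⨆ (M : ModuleCat.{u} A), gfdim A M

/-- sup of `U`-projective dimensions of injective modules. -/
noncomputable def relspli (U : Set (ModuleCat.{u} A)) : ℕ∞ :=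
  ⨆ (I : ModuleCat.{u} A) (_ : Injective I), resDim A U I
/-- sup of `V`-injective dimensions of projective modules. -/
noncomputable def relsilp (V : Set (ModuleCat.{u} A)) : ℕ∞ :=
  ⨆ (P : ModuleCat.{u} A) (_ : Projective P), coresDim A V P
/-- finitistic `U`-projective dimension. -/
noncomputable def relFPD (U : Set (ModuleCat.{u} A)) : ℕ∞ :=
  ⨆ (M : ModuleCat.{u} A) (_ : resDim A U M ≠ ⊤), resDim A U M
/-- finitistic `V`-injective dimension. -/
noncomputable def relFID (V : Set (ModuleCat.{u} A)) : ℕ∞ :=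
  ⨆ (M : ModuleCat.{u} A) (_ : coresDim A V M ≠ ⊤), coresDim A V M

/-- Every acyclic complex of injectives has cycles in `V`. -/
def WeaklyRightPeriodic (V : Set (ModuleCat.{u} A)) : Prop :=
  ∀ T : ChainComplex (ModuleCat.{u} A) ℤ,
    (∀ n, Injective (T.X n)) → Acyclic A T → ∀ n : ℤ, T.cycles n ∈ V

/-- Every acyclic complex of projectives has cycles in `U`. -/
def WeaklyLeftPeriodic (U : Set (ModuleCat.{u} A)) : Prop :=
  ∀ T : ChainComplex (ModuleCat.{u} A) ℤ,
    (∀ n, Projective (T.X n)) → Acyclic A T → ∀ n : ℤ, T.cycles n ∈ U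

/-- A right `U`-totally acyclic complex witnesses a right `U`-Gorenstein module. -/
def RightGorenstein (U V : Set (ModuleCat.{u} A)) : Set (ModuleCat.{u} A) :=
  {M | ∃ T : ChainComplex (ModuleCat.{u} A) ℤ,
    (∀ n, T.X n ∈ U) ∧ Acyclic A T ∧ (∀ n : ℤ, T.cycles n ∈ V) ∧
      (∀ W ∈ U ∩ V, HomFromExact A T W) ∧ Nonempty (M ≅ cokernel (T.d 1 0))}

/-- acyclic with all cycles in `V`. -/
def VAcyclicCx (V : Set (ModuleCat.{u} A)) (W : ChainComplex (ModuleCat.{u} A) ℤ) : Prop :=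
  Acyclic A W ∧ ∀ n : ℤ, W.cycles n ∈ V

/-- acyclic with all cycles in `U`. -/
def UAcyclicCx (U : Set (ModuleCat.{u} A)) (W : ChainComplex (ModuleCat.{u} A) ℤ) : Prop :=
  Acyclic A W ∧ ∀ n : ℤ, W.cycles n ∈ U

/-- A complex of modules in `U` is semi-`U` if every chain map to a `V`-acyclic
complex is null-homotopic (equivalently, `Hom(X,W)` is acyclic for `V`-acyclic `W`). -/
def SemiU (U V : Set (ModuleCat.{u} A)) (X : ChainComplex (ModuleCat.{u} A) ℤ) : Prop :=
  (∀ n, X.X n ∈ U) ∧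
    ∀ W : ChainComplex (ModuleCat.{u} A) ℤ, VAcyclicCx A V W →
      ∀ f : X ⟶ W, Nonempty (Homotopy f 0)

/-- A complex of modules in `V` is semi-`V` if every chain map from a `U`-acyclic
complex to it is null-homotopic. -/
def SemiV (U V : Set (ModuleCat.{u} A)) (Y : ChainComplex (ModuleCat.{u} A) ℤ) : Prop :=
  (∀ n, Y.X n ∈ V) ∧
    ∀ T : ChainComplex (ModuleCat.{u} A) ℤ, UAcyclicCx A U T →
      ∀ f : T ⟶ Y, Nonempty (Homotopy f 0)

/-- `W` is isomorphic to the module `M` in the derived category. -/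
def IsReplacementOf (W : ChainComplex (ModuleCat.{u} A) ℤ) (M : ModuleCat.{u} A) : Prop :=
  (∀ n : ℤ, n ≠ 0 → W.ExactAt n) ∧ Nonempty (W.homology 0 ≅ M)

/-- `RGor_U`-projective dimension of `M` is at most `n`: some semi-`U`-`V` replacement `W`
of `M` has `Coker(W_{n+1} → W_n)` right `U`-Gorenstein. -/
def RGorpdLE (U V : Set (ModuleCat.{u} A)) (n : ℕ) (M : ModuleCat.{u} A) : Prop :=
  ∃ W : ChainComplex (ModuleCat.{u} A) ℤ,
    SemiU A U V W ∧ SemiV A U V W ∧ IsReplacementOf A W M ∧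
      cokernel (W.d ((n : ℤ) + 1) (n : ℤ)) ∈ RightGorenstein A U V

/-- The `RGor_U`-projective dimension. -/
noncomputable def rgorDim (U V : Set (ModuleCat.{u} A)) (M : ModuleCat.{u} A) : ℕ∞ :=
  sInf {c : ℕ∞ | ∃ n : ℕ, c = n ∧ RGorpdLE A U V n M}

/-- The `RGor_U` relative Gorenstein global dimension. -/
noncomputable def rgorGldim (U V : Set (ModuleCat.{u} A)) : ℕ∞ :=
  ⨆ (M : ModuleCat.{u} A), rgorDim A U V M

/-- The Gorenstein flat-cotorsion dimension. -/
noncomputable def gfcDim (M : ModuleCat.{u} A) : ℕ∞ :=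
  rgorDim A (flatClass A) (cotClass A) M

/-- The Gorenstein flat-cotorsion global dimension. -/
noncomputable def Gfcgldim : ℕ∞ := rgorGldim A (flatClass A) (cotClass A)

/-- `A` is right weak coherent: products of flat left `A`-modules have finite
flat dimension. -/
def RightWeakCoherent : Prop :=
  ∀ (ι : Type u) (F : ι → ModuleCat.{u} A), (∀ i, F i ∈ flatClass A) →
    fdim A (ModuleCat.of A ((i : ι) → F i)) ≠ ⊤

/-- `A` is left `ℵ₀`-noetherian: every left ideal is countably generated. -/
def Aleph0Noetherian : Prop :=
  ∀ I : Ideal A, ∃ s : Set A, s.Countable ∧ Ideal.span s = I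

end Rest

section ShortExact

variable {A}

structure IsSES {X Y Z : ModuleCat.{u} A} (f : X ⟶ Y) (g : Y ⟶ Z) : Prop where
  injective : Function.Injective f
  surjective : Function.Surjective g
  range_eq_ker : LinearMap.range f.hom = LinearMap.ker g.hom

namespace IsSES

variable {X Y Z : ModuleCat.{u} A} {f : X ⟶ Y} {g : Y ⟶ Z}

lemma apply_apply (h : IsSES f g) (x : X) : g (f x) = 0 :=
  LinearMap.mem_ker.mp (h.range_eq_ker ▸ LinearMap.mem_range_self f.hom x)

lemma comp_eq_zero (h : IsSES f g) : f ≫ g = 0 := by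
  ext x
  exact h.apply_apply x

lemma exists_of_apply_eq_zero (h : IsSES f g) {y : Y} (hy : g y = 0) : ∃ x, f x = y :=
  LinearMap.mem_range.mp (h.range_eq_ker ▸ LinearMap.mem_ker.mpr hy)

lemma shortExact (h : IsSES f g) : (ShortComplex.mk f g h.comp_eq_zero).ShortExact where
  exact := (ShortComplex.moduleCat_exact_iff_range_eq_ker _).mpr h.range_eq_ker
  mono_f := (ModuleCat.mono_iff_injective f).mpr h.injective
  epi_g := (ModuleCat.epi_iff_surjective g).mpr h.surjective

lemma exists_retraction_of_projective (h : IsSES f g) [Projective Z] :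
    ∃ r : Y ⟶ X, f ≫ r = 𝟙 X :=
  ⟨_, h.shortExact.splittingOfProjective.f_r⟩

/-- Given the splitting `Q ≅ K × P` of `0 → K → Q → P → 0`, this is the sequence
`0 → K × P → M × P → N → 0` obtained from `0 → K → M → N → 0`. -/
lemma prod_of_retraction {K M N Q P : ModuleCat.{u} A} {σ : K ⟶ M} {τ : M ⟶ N}
    (hστ : IsSES σ τ) {ι : K ⟶ Q} {q : Q ⟶ P} (hιq : IsSES ι q) {ρ : Q ⟶ K}
    (hρ : ι ≫ ρ = 𝟙 K) :
    IsSES (ModuleCat.ofHom ((ρ ≫ σ).hom.prod q.hom) : Q ⟶ ModuleCat.of A (M × P))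
      (ModuleCat.ofHom (τ.hom ∘ₗ LinearMap.fst A M P)) := by
  have hρ' (k : K) : ρ (ι k) = k := congr(($hρ).hom k)
  refine ⟨(injective_iff_map_eq_zero _).mpr fun x hx => ?_, fun n => ?_, ?_⟩
  · obtain ⟨k, rfl⟩ := hιq.exists_of_apply_eq_zero congr(($hx).2)
    have hk : σ k = 0 := by simpa [hρ'] using congr(($hx).1)
    rw [(injective_iff_map_eq_zero _).mp hστ.injective k hk, map_zero]
  · obtain ⟨m, rfl⟩ := hστ.surjective n
    exact ⟨(m, 0), rfl⟩
  · apply le_antisymm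
    · rintro _ ⟨x, rfl⟩
      exact hστ.apply_apply (ρ x)
    · rintro ⟨m, p⟩ (hm : τ m = 0)
      obtain ⟨k, rfl⟩ := hστ.exists_of_apply_eq_zero hm
      obtain ⟨x, rfl⟩ := hιq.surjective p
      refine ⟨x + ι (k - ρ x), Prod.ext ?_ ?_⟩
      · simp [hρ']
      · simp [hιq.apply_apply]

end IsSES

lemma isSES_inl_snd (X Y : ModuleCat.{u} A) :
    IsSES (ModuleCat.ofHom (LinearMap.inl A X Y) : X ⟶ ModuleCat.of A (X × Y))
      (ModuleCat.ofHom (LinearMap.snd A X Y)) :=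
  ⟨LinearMap.inl_injective, LinearMap.snd_surjective, LinearMap.range_inl A X Y⟩

lemma exists_isSES_injective (M : ModuleCat.{u} A) :
    ∃ (E C : ModuleCat.{u} A) (i : M ⟶ E) (p : E ⟶ C), Injective E ∧ IsSES i p :=
  ⟨_, _, Injective.ι M, ModuleCat.ofHom (LinearMap.range (Injective.ι M).hom).mkQ,
    inferInstance, (ModuleCat.mono_iff_injective _).mp inferInstance, Submodule.mkQ_surjective _,
    (Submodule.ker_mkQ _).symm⟩

lemma exists_isSES_syzygy {Z : ModuleCat.{u} A} (P : ProjectiveResolution Z) :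
    ∃ (Ω : ModuleCat.{u} A) (ι : Ω ⟶ P.complex.X 0),
      IsSES ι (P.π.f 0) ∧ Nonempty (Ω ≅ cokernel (P.complex.d 2 1)) := by
  have h₁ : LinearMap.range (P.complex.d 2 1).hom = LinearMap.ker (P.complex.d 1 0).hom :=
    (ShortComplex.moduleCat_exact_iff_range_eq_ker _).mp (P.exact_succ 0)
  have h₀ : LinearMap.range (P.complex.d 1 0).hom = LinearMap.ker (P.π.f 0).hom :=
    (ShortComplex.moduleCat_exact_iff_range_eq_ker _).mp P.exact₀
  let d := (LinearMap.range (P.complex.d 2 1).hom).liftQ (P.complex.d 1 0).hom h₁.le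
  refine ⟨ModuleCat.of A _, ModuleCat.ofHom d, ⟨?_, ?_, ?_⟩,
    ⟨(ModuleCat.cokernelIsoRangeQuotient _).symm⟩⟩
  · exact LinearMap.ker_eq_bot.mp (Submodule.ker_liftQ_eq_bot _ _ _ h₁.ge)
  · exact (ModuleCat.epi_iff_surjective _).mp inferInstance
  · exact (Submodule.range_liftQ _ _ _).trans h₀

end ShortExact

section FiberProduct

variable {A} {E F C : ModuleCat.{u} A} (p : E ⟶ C) (g : F ⟶ C)

def fiberProduct : ModuleCat.{u} A :=
  ModuleCat.of A
    (LinearMap.ker (p.hom ∘ₗ LinearMap.fst A E F - g.hom ∘ₗ LinearMap.snd A E F))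

namespace fiberProduct

def fst : fiberProduct p g ⟶ E :=
  ModuleCat.ofHom (LinearMap.fst A E F ∘ₗ Submodule.subtype _)

def snd : fiberProduct p g ⟶ F :=
  ModuleCat.ofHom (LinearMap.snd A E F ∘ₗ Submodule.subtype _)

variable {p g}

lemma condition (w : fiberProduct p g) : p (fst p g w) = g (snd p g w) :=
  sub_eq_zero.mp w.2

lemma ext {w w' : fiberProduct p g} (h₁ : fst p g w = fst p g w')
    (h₂ : snd p g w = snd p g w') : w = w' :=
  Subtype.ext (Prod.ext h₁ h₂)

lemma exists_fst_snd {e : E} {x : F} (h : p e = g x) :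
    ∃ w, fst p g w = e ∧ snd p g w = x :=
  ⟨⟨(e, x), sub_eq_zero.mpr h⟩, rfl, rfl⟩

def lift {T : ModuleCat.{u} A} (a : T ⟶ E) (b : T ⟶ F) (h : a ≫ p = b ≫ g) :
    T ⟶ fiberProduct p g :=
  ModuleCat.ofHom (LinearMap.codRestrict _ (a.hom.prod b.hom) fun t =>
    sub_eq_zero.mpr congr(($h).hom t))

variable {T : ModuleCat.{u} A} {a : T ⟶ E} {b : T ⟶ F} {h : a ≫ p = b ≫ g}

@[simp] lemma lift_fst : lift a b h ≫ fst p g = a := rfl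

@[simp] lemma lift_snd : lift a b h ≫ snd p g = b := rfl

@[simp] lemma fst_lift (t : T) : fst p g (lift a b h t) = a t := rfl

@[simp] lemma snd_lift (t : T) : snd p g (lift a b h t) = b t := rfl

lemma hom_ext {φ ψ : T ⟶ fiberProduct p g} (h₁ : φ ≫ fst p g = ψ ≫ fst p g)
    (h₂ : φ ≫ snd p g = ψ ≫ snd p g) : φ = ψ :=
  ModuleCat.hom_ext (LinearMap.ext fun t => ext congr(($h₁).hom t) congr(($h₂).hom t))

end fiberProduct

end FiberProduct

namespace IsSES

open fiberProduct

variable {A} {K E F C : ModuleCat.{u} A}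

lemma fiberProduct_snd {j : K ⟶ E} {p : E ⟶ C} (h : IsSES j p) (g : F ⟶ C) :
    IsSES (lift j 0 (by rw [h.comp_eq_zero, zero_comp]) : K ⟶ fiberProduct p g)
      (snd p g) where
  injective := fun k k' hk => h.injective congr(fst p g $hk)
  surjective x := by
    obtain ⟨e, he⟩ := h.surjective (g x)
    obtain ⟨w, -, hw⟩ := exists_fst_snd he
    exact ⟨w, hw⟩
  range_eq_ker := by
    refine le_antisymm (fun _ ⟨k, hk⟩ => hk ▸ rfl) fun w (hw : snd p g w = 0) => ?_
    obtain ⟨k, hk⟩ := h.exists_of_apply_eq_zero (by rw [condition, hw, map_zero])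
    exact ⟨k, ext hk hw.symm⟩

lemma fiberProduct_fst {j : K ⟶ F} {g : F ⟶ C} (h : IsSES j g) (p : E ⟶ C) :
    IsSES (lift 0 j (by rw [h.comp_eq_zero, zero_comp]) : K ⟶ fiberProduct p g)
      (fst p g) where
  injective := fun k k' hk => h.injective congr(snd p g $hk)
  surjective e := by
    obtain ⟨x, hx⟩ := h.surjective (p e)
    obtain ⟨w, hw, -⟩ := exists_fst_snd hx.symm
    exact ⟨w, hw⟩
  range_eq_ker := by
    refine le_antisymm (fun _ ⟨k, hk⟩ => hk ▸ rfl) fun w (hw : fst p g w = 0) => ?_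
    obtain ⟨k, hk⟩ := h.exists_of_apply_eq_zero (by rw [← condition, hw, map_zero])
    exact ⟨k, ext hw.symm hk⟩

lemma fiberProduct_fst_of_injective {Y Z : ModuleCat.{u} A} {f : K ⟶ Y} {q : Y ⟶ Z}
    (h : IsSES f q) {τ : E ⟶ Y} (hτ : Function.Surjective τ) :
    IsSES (fst τ f) (τ ≫ q) where
  injective w w' hw := ext hw (h.injective (by rw [← condition, ← condition, hw]))
  surjective z := by
    obtain ⟨y, rfl⟩ := h.surjective z
    obtain ⟨e, rfl⟩ := hτ y
    exact ⟨e, rfl⟩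
  range_eq_ker := by
    apply le_antisymm
    · rintro _ ⟨w, rfl⟩
      show q (τ (fst τ f w)) = 0
      rw [condition, h.apply_apply]
    · intro e (he : q (τ e) = 0)
      obtain ⟨k, hk⟩ := h.exists_of_apply_eq_zero he
      obtain ⟨w, hw, -⟩ := exists_fst_snd hk.symm
      exact ⟨w, hw⟩

end IsSES

section Ext1

variable {A}

lemma Ext1Zero.exists_retraction {M N E : ModuleCat.{u} A} (hMN : Ext1Zero A M N)
    {i : N ⟶ E} {p : E ⟶ M} (h : IsSES i p) : ∃ r : E ⟶ N, i ≫ r = 𝟙 N :=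
  hMN E i p h.injective h.surjective h.range_eq_ker

lemma ext1Zero_of_injective (L M : ModuleCat.{u} A) [Injective M] : Ext1Zero A L M :=
  fun _ _ _ hi hp hip => ⟨_, (IsSES.shortExact ⟨hi, hp, hip⟩).splittingOfInjective.f_r⟩

lemma Ext1Zero.of_retract {X Y N : ModuleCat.{u} A} (hY : Ext1Zero A Y N) (h : Retract X Y) :
    Ext1Zero A X N := by
  intro E i p hi hp hip
  have hs : IsSES i p := ⟨hi, hp, hip⟩
  -- the pullback of `E` along `h.r` splits, and `E` maps into it through `h.i`
  obtain ⟨r, hr⟩ := hY.exists_retraction (hs.fiberProduct_snd h.r)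
  refine ⟨fiberProduct.lift (𝟙 E) (p ≫ h.i) (by simp) ≫ r, ?_⟩
  rw [← Category.assoc, ← hr]
  congr 1
  apply fiberProduct.hom_ext
  · simp
  · simp only [Category.assoc, fiberProduct.lift_snd]
    rw [← Category.assoc, hs.comp_eq_zero, zero_comp]

lemma Ext1Zero.exists_extension {E' E Z N : ModuleCat.{u} A} {j : E' ⟶ E} {q : E ⟶ Z}
    (hZ : Ext1Zero A Z N) (h : IsSES j q) (φ : E' ⟶ N) : ∃ ψ : E ⟶ N, j ≫ ψ = φ := by
  -- the pushout `Q` of `j` along `φ` is an extension of `Z` by `N`, which splits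
  let S : Submodule A (N × E) := LinearMap.range (φ.hom.prod (-j.hom))
  let Q := ModuleCat.of A ((N × E) ⧸ S)
  let iQ : N ⟶ Q := ModuleCat.ofHom (S.mkQ ∘ₗ LinearMap.inl A N E)
  let jQ : E ⟶ Q := ModuleCat.ofHom (S.mkQ ∘ₗ LinearMap.inr A N E)
  have hS : S ≤ LinearMap.ker (q.hom ∘ₗ LinearMap.snd A N E) := by
    rintro _ ⟨e, rfl⟩
    simp [h.apply_apply]
  let pQ : Q ⟶ Z := ModuleCat.ofHom (S.liftQ _ hS)
  have hcomm : j ≫ jQ = φ ≫ iQ := ModuleCat.hom_ext <| LinearMap.ext fun e =>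
    show jQ (j e) = iQ (φ e) from (Submodule.Quotient.eq S).mpr ⟨-e, by simp⟩
  have hQ : IsSES iQ pQ := by
    refine ⟨(injective_iff_map_eq_zero _).mpr fun n hn => ?_, fun z => ?_, ?_⟩
    · obtain ⟨e, he⟩ := (Submodule.Quotient.mk_eq_zero S).mp hn
      have he₀ : e = 0 := h.injective (by simpa using congr(($he).2))
      simpa [he₀] using congr(($he).1).symm
    · obtain ⟨e, rfl⟩ := h.surjective z
      exact ⟨jQ e, rfl⟩
    · apply le_antisymm
      · rintro _ ⟨n, rfl⟩
        exact map_zero q.hom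
      · intro x hx
        obtain ⟨⟨n, e⟩, rfl⟩ := Submodule.mkQ_surjective S x
        obtain ⟨e', rfl⟩ := h.exists_of_apply_eq_zero hx
        exact ⟨n + φ e', (Submodule.Quotient.eq S).mpr ⟨e', Prod.ext (by simp) (by simp)⟩⟩
  obtain ⟨r, hr⟩ := hZ.exists_retraction hQ
  exact ⟨jQ ≫ r, by rw [← Category.assoc, hcomm, Category.assoc, hr, Category.comp_id]⟩

lemma Ext1Zero.of_isSES {X Y Z N : ModuleCat.{u} A} {f : X ⟶ Y} {q : Y ⟶ Z} (h : IsSES f q)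
    (hX : Ext1Zero A X N) (hZ : Ext1Zero A Z N) : Ext1Zero A Y N := by
  intro E i p hi hp hip
  have hs : IsSES i p := ⟨hi, hp, hip⟩
  -- the pullback of `E` along `f` splits, and its splitting extends to `E` as `Ext¹(Z, N) = 0`
  obtain ⟨r, hr⟩ := hX.exists_retraction (hs.fiberProduct_snd f)
  obtain ⟨ψ, hψ⟩ := hZ.exists_extension (h.fiberProduct_fst_of_injective hp) r
  exact ⟨ψ, by rw [← hr, ← hψ]; rfl⟩

end Ext1

section CotorsionPair

variable {A} {U V : Set (ModuleCat.{u} A)}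

namespace IsCotorsionPair

lemma ext1Zero (hpair : IsCotorsionPair A U V) {M N : ModuleCat.{u} A} (hM : M ∈ U)
    (hN : N ∈ V) : Ext1Zero A M N :=
  (hpair.1 ▸ hM : M ∈ {M | ∀ N ∈ V, Ext1Zero A M N}) N hN

lemma mem_left (hpair : IsCotorsionPair A U V) {M : ModuleCat.{u} A}
    (h : ∀ N ∈ V, Ext1Zero A M N) : M ∈ U :=
  hpair.1 ▸ h

lemma mem_of_isSES (hpair : IsCotorsionPair A U V) {X Y Z : ModuleCat.{u} A} {f : X ⟶ Y}
    {g : Y ⟶ Z} (h : IsSES f g) (hX : X ∈ U) (hZ : Z ∈ U) : Y ∈ U :=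
  hpair.mem_left fun _ hN => Ext1Zero.of_isSES h (hpair.ext1Zero hX hN) (hpair.ext1Zero hZ hN)

lemma prod_mem (hpair : IsCotorsionPair A U V) {X Y : ModuleCat.{u} A} (hX : X ∈ U)
    (hY : Y ∈ U) : ModuleCat.of A (X × Y) ∈ U :=
  hpair.mem_of_isSES (isSES_inl_snd X Y) hX hY

lemma kernel_mem (hpair : IsCotorsionPair A U V) (hhered : IsHereditaryPair A U V)
    {K Y Z : ModuleCat.{u} A} {f : K ⟶ Y} {g : Y ⟶ Z} (h : IsSES f g) (hY : Y ∈ U)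
    (hZ : Z ∈ U) : K ∈ U := by
  refine hpair.mem_left fun N hN => ?_
  let P := ProjectiveResolution.of Z
  obtain ⟨Ω, ι, hι, ⟨e⟩⟩ := exists_isSES_syzygy P
  -- `Ext¹(Ω, N) = Ext²(Z, N)`, and `K` is a direct summand of the fibre product of `g` and
  -- `P₀ → Z`, an extension of `Y` by `Ω`
  have hΩ : Ext1Zero A Ω N := (hhered Z hZ N hN 1 P).of_retract (Retract.ofIso e)
  have hQ : Ext1Zero A (fiberProduct g (P.π.f 0)) N :=
    Ext1Zero.of_isSES (hι.fiberProduct_fst g) hΩ (hpair.ext1Zero hY hN)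
  obtain ⟨ρ, hρ⟩ := (h.fiberProduct_snd (P.π.f 0)).exists_retraction_of_projective
  exact hQ.of_retract ⟨_, ρ, hρ⟩

end IsCotorsionPair

end CotorsionPair

namespace ResLE

variable {A} {U V : Set (ModuleCat.{u} A)}

lemma mono {m k : ℕ} (hmk : m ≤ k) {M : ModuleCat.{u} A} (h : ResLE A U m M) :
    ResLE A U k M := by
  induction k, hmk using Nat.le_induction with
  | base => exact h
  | succ k _ ih => exact Or.inl ih

lemma succ_of_isSES {m : ℕ} {K U₀ M : ModuleCat.{u} A} {j : K ⟶ U₀} {p : U₀ ⟶ M}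
    (hU₀ : U₀ ∈ U) (h : IsSES j p) (hK : ResLE A U m K) : ResLE A U (m + 1) M :=
  Or.inr ⟨K, U₀, j, p, hU₀, h.injective, h.surjective, h.range_eq_ker, hK⟩

lemma kernel_of_isSES (hpair : IsCotorsionPair A U V) (hhered : IsHereditaryPair A U V)
    {a : ℕ} {K Y Z : ModuleCat.{u} A} {f : K ⟶ Y} {g : Y ⟶ Z} (h : IsSES f g) (hZ : Z ∈ U)
    (hY : ResLE A U a Y) : ResLE A U a K := by
  induction a generalizing K Y f g with
  | zero => exact hpair.kernel_mem hhered h hY hZ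
  | succ a ih =>
    rcases hY with hY | ⟨S, UY, σ, τ, hUY, hσ, hτ, hστ, hS⟩
    · exact Or.inl (ih h hY)
    · exact succ_of_isSES (hpair.kernel_mem hhered (h.fiberProduct_fst_of_injective hτ) hUY hZ)
        (IsSES.fiberProduct_snd ⟨hσ, hτ, hστ⟩ f) hS

lemma extension_of_isSES (hpair : IsCotorsionPair A U V) (hhered : IsHereditaryPair A U V)
    (hcomplete : IsCompletePair A U V) {m : ℕ} {X Y Z : ModuleCat.{u} A} {f : X ⟶ Y}
    {g : Y ⟶ Z} (h : IsSES f g) (hZ : Z ∈ U) (hX : ResLE A U m X) : ResLE A U m Y := by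
  induction m generalizing X Y Z f g with
  | zero => exact hpair.mem_of_isSES h hX hZ
  | succ m ih =>
    rcases hX with hX | ⟨K, U₀, j, π, hU₀, hj, hπ, hjπ, hK⟩
    · exact Or.inl (ih h hZ hX)
    obtain ⟨KY, UY, σ, τ, hUY, hKY, hσ, hτ, hστ⟩ := hcomplete.1 Y
    have hστ : IsSES σ τ := ⟨hσ, hτ, hστ⟩
    -- `W = τ⁻¹(f X)` is an extension of `X` by `KY` lying in `U`
    have hW₁ := hστ.fiberProduct_snd f
    have hW : fiberProduct τ f ∈ U :=
      hpair.kernel_mem hhered (h.fiberProduct_fst_of_injective hτ) hUY hZ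
    -- its fibre product `Q` with `U₀` over `X` has `0 → K → Q → W → 0`, and
    -- `0 → KY → Q → U₀ → 0` splits because `Ext¹(U₀, KY) = 0`
    have hQ₁ := hW₁.fiberProduct_snd π
    have hQ₂ := IsSES.fiberProduct_fst ⟨hj, hπ, hjπ⟩ (fiberProduct.snd τ f)
    obtain ⟨ρ, hρ⟩ := (hpair.ext1Zero hU₀ hKY).exists_retraction hQ₁
    exact succ_of_isSES (hpair.prod_mem hUY hU₀) (hστ.prod_of_retraction hQ₁ hρ)
      (ih hQ₂ hW hK)

lemma resDim_le {m : ℕ} {M : ModuleCat.{u} A} (h : ResLE A U m M) : resDim A U M ≤ m :=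
  sInf_le ⟨m, rfl, h⟩

lemma of_resDim_le {n : ℕ} {M : ModuleCat.{u} A} (h : resDim A U M ≤ n) : ResLE A U n M := by
  obtain ⟨_, ⟨k, rfl, hk⟩, hlt⟩ :=
    sInf_lt_iff.mp (h.trans_lt (ENat.natCast_lt_natCast.mpr n.lt_succ_self))
  exact hk.mono (Nat.lt_succ_iff.mp (ENat.natCast_lt_natCast.mp hlt))

lemma of_relspli_le {n : ℕ} (hs : relspli A U ≤ n) (I : ModuleCat.{u} A) [Injective I] :
    ResLE A U n I :=
  of_resDim_le ((le_iSup₂ (f := fun I (_ : Injective I) => resDim A U I) I ‹_›).trans hs)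

lemma of_relFPD_le {n t : ℕ} (hf : relFPD A U ≤ n) {M : ModuleCat.{u} A}
    (h : ResLE A U t M) : ResLE A U n M :=
  of_resDim_le ((le_iSup₂ (f := fun M (_ : resDim A U M ≠ ⊤) => resDim A U M) M
    (ne_top_of_le_ne_top (ENat.natCast_ne_top t) (resDim_le h))).trans hf)

-- The three parts are proved together: each reduces to the others, the first two at smaller `s`.
lemma exists_of_isSES (hpair : IsCotorsionPair A U V) (hhered : IsHereditaryPair A U V)
    (hcomplete : IsCompletePair A U V) (s : ℕ) :
    (∀ {a m : ℕ} {X Y Z : ModuleCat.{u} A} {f : X ⟶ Y} {g : Y ⟶ Z},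
      a + m ≤ s → IsSES f g → ResLE A U a Y → ResLE A U m Z → ∃ t, ResLE A U t X) ∧
    (∀ {a m : ℕ} {X Y Z : ModuleCat.{u} A} {f : X ⟶ Y} {g : Y ⟶ Z},
      a + m ≤ s → IsSES f g → ResLE A U a X → ResLE A U m Z → ∃ t, ResLE A U t Y) ∧
    (∀ {a m : ℕ} {X Y Z : ModuleCat.{u} A} {f : X ⟶ Y} {g : Y ⟶ Z},
      a + m ≤ s → IsSES f g → ResLE A U a Y → ResLE A U m X → ∃ t, ResLE A U t Z) := by
  induction s using Nat.strong_induction_on with | _ s ih => ?_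
  have kernel : ∀ {a m : ℕ} {X Y Z : ModuleCat.{u} A} {f : X ⟶ Y} {g : Y ⟶ Z},
      a + m ≤ s → IsSES f g → ResLE A U a Y → ResLE A U m Z → ∃ t, ResLE A U t X := by
    intro a m X Y Z f g hs h hY hZ
    match m, hZ with
    | 0, hZ => exact ⟨a, kernel_of_isSES hpair hhered h hZ hY⟩
    | m + 1, Or.inl hZ => exact (ih (a + m) (by omega)).1 le_rfl h hY hZ
    | m + 1, Or.inr ⟨KZ, UZ, j, π, hUZ, hj, hπ, hjπ, hKZ⟩ =>
      obtain ⟨t, hP⟩ := (ih (m + a) (by omega)).2.1 le_rfl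
        (IsSES.fiberProduct_fst ⟨hj, hπ, hjπ⟩ g) hKZ hY
      exact ⟨t, kernel_of_isSES hpair hhered (h.fiberProduct_snd π) hUZ hP⟩
  have extension : ∀ {a m : ℕ} {X Y Z : ModuleCat.{u} A} {f : X ⟶ Y} {g : Y ⟶ Z},
      a + m ≤ s → IsSES f g → ResLE A U a X → ResLE A U m Z → ∃ t, ResLE A U t Y := by
    intro a m X Y Z f g hs h hX hZ
    match m, hZ with
    | 0, hZ => exact ⟨a, extension_of_isSES hpair hhered hcomplete h hZ hX⟩
    | m + 1, Or.inl hZ => exact (ih (a + m) (by omega)).2.1 le_rfl h hX hZ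
    | m + 1, Or.inr ⟨KZ, UZ, j, π, hUZ, hj, hπ, hjπ, hKZ⟩ =>
      exact (ih (a + m) (by omega)).2.2 le_rfl (IsSES.fiberProduct_fst ⟨hj, hπ, hjπ⟩ g)
        (extension_of_isSES hpair hhered hcomplete (h.fiberProduct_snd π) hUZ hX) hKZ
  refine ⟨kernel, extension, fun {a m X Y Z f g} hs h hY hX => ?_⟩
  obtain ⟨KZ, UZ, j, π, hUZ, -, hj, hπ, hjπ⟩ := hcomplete.1 Z
  have hj : IsSES j π := ⟨hj, hπ, hjπ⟩
  obtain ⟨t, hKZ⟩ := kernel (add_comm a m ▸ hs) (hj.fiberProduct_fst g)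
    (extension_of_isSES hpair hhered hcomplete (h.fiberProduct_snd π) hUZ hX) hY
  exact ⟨t + 1, succ_of_isSES hUZ hj hKZ⟩

end ResLE

theorem stmt_4_general (A : Type u) [Ring A] (U V : Set (ModuleCat.{u} A))
    (hpair : IsCotorsionPair A U V) (hcomplete : IsCompletePair A U V)
    (hhered : IsHereditaryPair A U V)
    (n : ℕ) (hs : relspli A U ≤ n) (hf : relFPD A U ≤ n)
    (M : ModuleCat.{u} A) :
    Injective M ↔
      (ResLE A U n M ∧ ∀ L : ModuleCat.{u} A, ResLE A U n L → Ext1Zero A L M) := by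
  refine ⟨fun _ => ⟨ResLE.of_relspli_le hs M, fun L _ => ext1Zero_of_injective L M⟩,
    fun ⟨hM, hperp⟩ => ?_⟩
  obtain ⟨E, C, i, p, hE, h⟩ := exists_isSES_injective M
  obtain ⟨t, hC⟩ := (ResLE.exists_of_isSES hpair hhered hcomplete (n + n)).2.2 le_rfl h
    (ResLE.of_relspli_le hs E) hM
  obtain ⟨r, hr⟩ := (hperp C (ResLE.of_relFPD_le hf hC)).exists_retraction h
  exact Retract.injective ⟨i, r, hr⟩

/-- `U_n ∩ U_n^⊥ = Inj` when `max{relspli(U), relFPD(U)} ≤ n`. -/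
theorem stmt_4 (A : Type u) [Ring A] (U V : Set (ModuleCat.{u} A))
    (hpair : IsCotorsionPair A U V) (hcomplete : IsCompletePair A U V)
    (hhered : IsHereditaryPair A U V) (hwrp : WeaklyRightPeriodic A V)
    (n : ℕ) (hs : relspli A U ≤ n) (hf : relFPD A U ≤ n)
    (M : ModuleCat.{u} A) :
    Injective M ↔
      (ResLE A U n M ∧ ∀ L : ModuleCat.{u} A, ResLE A U n L → Ext1Zero A L M) :=
  stmt_4_general A U V hpair hcomplete hhered n hs hf M

end OSG
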